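/- For every n ≥ 3, the inequality H_{n,(2,2,2)} ≥ H_{n,(3,1,1,1)} fails at the point x = (2,1,…,1) ∈ [0,∞)^n (first coordinate 2, the remaining n−1 coordinates 1): H_{n,(2,2,2)}(2,1,…,1) < H_{n,(3,1,1,1)}(2,1,…,1). Explicitly, (h_{n,2}(x))^3 / C(n+1,2)^3 < h_{n,3}(x) · (h_{n,1}(x))^3 / (C(n+2,3) · n^3) at this point. -/

import Mathlib

/-- The complete homogeneous symmetric polynomial `h_{n,k}`, as a function on `ℝ^n`:
the sum of all monomials of total degree `k` in `x 0, …, x (n-1)` (with `h_{n,0} = 1`). -/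
noncomputable def hsym (n k : ℕ) (x : Fin n → ℝ) : ℝ :=
  ∑ d ∈ Finset.Nat.antidiagonalTuple n k, ∏ i, x i ^ d i

/-!
Splitting off the first variable gives `h_k(a, x) = ∑ᵢ aⁱ h_{k-i}(x)` and `h_k(1,…,1) = C(n+k-1, k)`,
so at `(2,1,…,1)` every quantity in the claim is an explicit polynomial in `n`. After clearing
denominators the claim reads `n(n+2)(n²+3n+4)³ < (n³+6n²+17n+24)(n+1)⁵`; the difference
`2n⁵ + n⁴ - 15n³ - 21n² + 9n + 24` has only positive coefficients as a polynomial in `n - 3`.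
-/

open Finset

lemma hsym_zero_right (n : ℕ) (x : Fin n → ℝ) : hsym n 0 x = 1 := by
  simp [hsym, Nat.antidiagonalTuple_zero_right]

lemma hsym_zero_succ (k : ℕ) (x : Fin 0 → ℝ) : hsym 0 (k + 1) x = 0 := by
  simp [hsym, Nat.antidiagonalTuple_zero_succ]

lemma hsym_cons (n k : ℕ) (a : ℝ) (x : Fin n → ℝ) :
    hsym (n + 1) k (Fin.cons a x) = ∑ p ∈ antidiagonal k, a ^ p.1 * hsym n p.2 x := by
  simp only [hsym, Finset.sum, Nat.antidiagonalTuple, Multiset.Nat.antidiagonalTuple,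
    List.Nat.antidiagonalTuple, HasAntidiagonal.antidiagonal, Multiset.Nat.antidiagonal,
    Multiset.map_coe, Multiset.sum_coe, List.map_flatMap, List.map_map]
  simp only [List.flatMap, Fin.prod_univ_succ, Fin.cons_zero, Fin.cons_succ, Function.comp_def,
    List.sum_flatten, List.map_map, List.sum_map_mul_left]

lemma hsym_succ_cons (n k : ℕ) (a : ℝ) (x : Fin n → ℝ) :
    hsym (n + 1) (k + 1) (Fin.cons a x) =
      a * hsym (n + 1) k (Fin.cons a x) + hsym n (k + 1) x := by
  simp only [hsym_cons, Nat.sum_antidiagonal_succ, pow_zero, one_mul, pow_succ, mul_sum]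
  rw [add_comm]
  congr 1
  exact sum_congr rfl fun p _ => by ring

lemma hsym_one (n k : ℕ) : hsym n k (fun _ => 1) = n.multichoose k := by
  induction n generalizing k with
  | zero => cases k <;> simp [hsym_zero_right, hsym_zero_succ]
  | succ n ihn =>
    have hcons : (fun _ : Fin (n + 1) => (1 : ℝ)) = Fin.cons 1 fun _ => 1 :=
      (Fin.cons_self_tail _).symm
    induction k with
    | zero => simp [hsym_zero_right]
    | succ k ihk =>
      rw [hcons] at ihk ⊢
      rw [hsym_succ_cons, ihk, ihn, Nat.multichoose_succ_succ]
      push_cast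
      ring

lemma Nat.cast_multichoose_eq_ascPochhammer_div (K : Type*) [DivisionSemiring K] [CharZero K]
    (n k : ℕ) : (n.multichoose k : K) = (ascPochhammer K k).eval (n : K) / k.factorial := by
  rw [eq_div_iff (Nat.cast_ne_zero.2 k.factorial_ne_zero),
    ascPochhammer_nat_eq_natCast_ascFactorial, Nat.ascFactorial_eq_factorial_mul_choose',
    ← Nat.multichoose_eq, mul_comm, Nat.cast_mul]

lemma ite_val_eq_zero_eq_cons {α : Type*} (m : ℕ) (a b : α) :
    (fun i : Fin (m + 1) => if (i : ℕ) = 0 then a else b) = Fin.cons a fun _ => b := by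
  funext i
  cases i using Fin.cases <;> simp

/-- For every `n ≥ 3`, the inequality `H_{n,(2,2,2)} ≥ H_{n,(3,1,1,1)}` fails at the
point `(2,1,…,1)`: there `h_{n,2}^3/C(n+1,2)^3 < h_{n,3}·h_{n,1}^3/(C(n+2,3)·n^3)`. -/
theorem H222_lt_H3111_at_counterexample_point (n : ℕ) (hn : 3 ≤ n) :
    (hsym n 2 (fun i => if (i : ℕ) = 0 then 2 else 1)) ^ 3 /
        (((n + 1).choose 2 : ℝ)) ^ 3 <
      hsym n 3 (fun i => if (i : ℕ) = 0 then 2 else 1) *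
          (hsym n 1 (fun i => if (i : ℕ) = 0 then 2 else 1)) ^ 3 /
        (((n + 2).choose 3 : ℝ) * (n : ℝ) ^ 3) := by
  have hC2 : (n + 1).choose 2 = n.multichoose 2 := (Nat.multichoose_eq n 2).symm
  have hC3 : (n + 2).choose 3 = n.multichoose 3 := (Nat.multichoose_eq n 3).symm
  obtain ⟨t, rfl⟩ : ∃ t, n = t + 2 + 1 := ⟨n - 3, by omega⟩
  rw [hC2, hC3, ite_val_eq_zero_eq_cons]
  norm_num [hsym_cons, hsym_one, Nat.sum_antidiagonal_eq_sum_range_succ_mk, sum_range_succ,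
    Nat.cast_multichoose_eq_ascPochhammer_div, ascPochhammer_succ_eval, Nat.factorial]
  rw [div_lt_div_iff₀ (by positivity) (by positivity), ← sub_pos]
  ring_nf
  positivity
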